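/- arXiv:1802.06369 — 5 statements merged into one kernel-verified Lean document; each statement's English description precedes it below -/
import Mathlib

section
/- For every positive integer d, there exists a d-cover S(d) ⊆ ℤ⁺ such that |S(d) ∩ [1..n]| = O(n/√d) for all n. -/
private lemma mod_shift (d i b : ℕ) (hd : 0 < d) :
    (i + ((b + (d - i % d)) % d)) % d = b % d := by
  have h1 : (i + ((b + (d - i % d)) % d)) % d = (i + (b + (d - i % d))) % d :=
    Nat.add_mod_mod i _ d
  have h2 : i + (b + (d - i % d)) = b + d * (i / d) + d := by
    have h := Nat.div_add_mod i d
    have h' := Nat.mod_lt i hd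
    omega
  rw [h1, h2, Nat.add_mod_right, Nat.add_mul_mod_self_left]

private lemma mod_shift' (d j i b : ℕ) :
    (j + ((b + (d - i % d)) % d)) % d = (b + ((j + (d - i % d)) % d)) % d := by
  rw [Nat.add_mod_mod, Nat.add_mod_mod,
    show j + (b + (d - i % d)) = b + (j + (d - i % d)) by ring]

/-- for every positive `d` there exists a `d`-cover `S(d) ⊆ ℤ⁺` whose
intersection with `[1..n]` has `O(n/√d)` elements: there is an absolute constant `C`
such that `|S(d) ∩ [1..n]| ≤ C·n/√d + C` for all `n`. -/
theorem exists_sparse_difference_cover :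
    ∃ C : ℕ, 0 < C ∧ ∀ d : ℕ, 0 < d →
      ∃ S : Set ℕ,
        (∀ x ∈ S, 0 < x) ∧
        (∀ i j : ℕ, 0 < i → 0 < j → ∃ h : ℕ, h < d ∧ i + h ∈ S ∧ j + h ∈ S) ∧
        (∀ n : ℕ, ((S ∩ Set.Icc 1 n).ncard : ℝ) ≤ C * n / Real.sqrt d + C) := by
  refine ⟨100, by norm_num, ?_⟩
  intro d hd
  have hd0 : (0:ℝ) < d := by exact_mod_cast hd
  have hs0 : (0:ℝ) < Real.sqrt d := Real.sqrt_pos.mpr hd0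
  by_cases hsmall : d ≤ 10000
  · -- small d : take all positive integers
    refine ⟨{x | 0 < x}, fun x hx => hx,
      fun i j hi hj => ⟨0, hd, by simpa using hi, by simpa using hj⟩, ?_⟩
    intro n
    have h1 : {x : ℕ | 0 < x} ∩ Set.Icc 1 n = Set.Icc 1 n := by
      ext x
      simp only [Set.mem_inter_iff, Set.mem_setOf_eq, Set.mem_Icc]
      omega
    have h2 : (Set.Icc 1 n).ncard = n := by
      rw [← Finset.coe_Icc, Set.ncard_coe_finset, Nat.card_Icc]
      omega
    rw [h1, h2]
    have hsle : Real.sqrt d ≤ 100 := by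
      rw [show (100:ℝ) = Real.sqrt (100 * 100) by rw [Real.sqrt_mul_self]; norm_num]
      apply Real.sqrt_le_sqrt
      have : (d:ℝ) ≤ 10000 := by exact_mod_cast hsmall
      linarith
    have : (100 * n : ℝ) / 100 ≤ 100 * n / Real.sqrt d :=
      div_le_div_of_nonneg_left (by positivity) hs0 hsle
    have hn : (n:ℝ) = 100 * n / 100 := by ring
    linarith
  · -- large d
    push_neg at hsmall
    set r : ℕ := Nat.sqrt d + 1 with hrdef
    have hsq1 : Nat.sqrt d * Nat.sqrt d ≤ d := Nat.sqrt_le d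
    have hsq2 : d < r * r := Nat.lt_succ_sqrt d
    have hsq100 : 100 ≤ Nat.sqrt d := by rw [Nat.le_sqrt]; omega
    have hr0 : 0 < r := by omega
    have h2r : 2 * r ≤ d := by nlinarith
    refine ⟨{x | 0 < x ∧ (r ∣ x % d ∨ d ≤ x % d + r)}, fun x hx => hx.1, ?_, ?_⟩
    · -- cover property
      intro i j hi hj
      set a := i % d with hadef
      set δ := (j + (d - a)) % d with hδdef
      have hδd : δ < d := Nat.mod_lt _ hd
      by_cases hcase : δ % r = 0
      · refine ⟨(0 + (d - a)) % d, Nat.mod_lt _ hd, ⟨by omega, Or.inl ?_⟩, ⟨by omega, Or.inl ?_⟩⟩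
        · rw [mod_shift d i 0 hd]
          simp
        · rw [mod_shift' d j i 0]
          simp only [Nat.zero_add]
          rw [Nat.mod_mod_of_dvd _ (dvd_refl d)]
          have hjd : (j + (d - i % d)) % d = δ := rfl
          rw [hjd]
          exact Nat.dvd_of_mod_eq_zero hcase
      · set s := δ % r with hsdef
        have hs1 : 1 ≤ s := by omega
        have hsr : s < r := Nat.mod_lt _ hr0
        have hsδ : s ≤ δ := Nat.mod_le δ r
        have hdm := Nat.div_add_mod δ r
        refine ⟨((d - s) + (d - a)) % d, Nat.mod_lt _ hd, ⟨by omega, Or.inr ?_⟩,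
          ⟨by omega, Or.inl ?_⟩⟩
        · rw [mod_shift d i (d - s) hd, Nat.mod_eq_of_lt (by omega)]
          omega
        · rw [mod_shift' d j i (d - s)]
          have he : (d - s) + δ = d + r * (δ / r) := by omega
          rw [show ((j + (d - a)) % d) = δ by rw [hδdef], he, Nat.add_mod_left,
            Nat.mod_eq_of_lt (by omega)]
          exact Dvd.intro _ rfl
    · -- counting
      intro n
      have hSfin : {x : ℕ | 0 < x ∧ (r ∣ x % d ∨ d ≤ x % d + r)} ∩ Set.Icc 1 n =
          ↑((Finset.Icc 1 n).filter (fun x => r ∣ x % d ∨ d ≤ x % d + r)) := by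
        ext x
        simp only [Set.mem_inter_iff, Set.mem_setOf_eq, Set.mem_Icc, Finset.coe_filter,
          Finset.mem_Icc]
        constructor
        · rintro ⟨⟨h1, h2⟩, h3⟩; exact ⟨h3, h2⟩
        · rintro ⟨h3, h2⟩; exact ⟨⟨h3.1, h2⟩, h3⟩
      rw [hSfin, Set.ncard_coe_finset]
      -- split into the two parts
      have hsplit : (Finset.Icc 1 n).filter (fun x => r ∣ x % d ∨ d ≤ x % d + r) =
          (Finset.Icc 1 n).filter (fun x => r ∣ x % d) ∪
          (Finset.Icc 1 n).filter (fun x => d ≤ x % d + r) := Finset.filter_or _ _ _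
      set FA := (Finset.Icc 1 n).filter (fun x => r ∣ x % d) with hFA
      set FB := (Finset.Icc 1 n).filter (fun x => d ≤ x % d + r) with hFB
      have hcard : ((Finset.Icc 1 n).filter (fun x => r ∣ x % d ∨ d ≤ x % d + r)).card ≤
          FA.card + FB.card := by
        rw [hsplit]; exact Finset.card_union_le _ _
      -- bound FA
      have hAcard : FA.card ≤ (n / d) * (d / r + 1) + (n % d / r + 1) := by
        have hmain : FA.card ≤ ((Finset.range (n / d) ×ˢ Finset.range (d / r + 1)) ∪
            ({n / d} ×ˢ Finset.range (n % d / r + 1))).card := by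
          apply Finset.card_le_card_of_injOn (fun x => (x / d, x % d / r))
          · intro x hx
            simp only [Finset.mem_coe, hFA, Finset.mem_filter, Finset.mem_Icc] at hx
            obtain ⟨⟨hx1, hx2⟩, hxdvd⟩ := hx
            simp only [Finset.mem_coe, Finset.mem_union, Finset.mem_product, Finset.mem_range,
              Finset.mem_singleton]
            have hxd : x / d ≤ n / d := Nat.div_le_div_right hx2
            rcases lt_or_eq_of_le hxd with h | h
            · left
              refine ⟨h, ?_⟩
              have : x % d / r ≤ d / r := Nat.div_le_div_right (Nat.mod_lt x hd).le
              omega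
            · right
              refine ⟨h, ?_⟩
              have e1 := Nat.div_add_mod x d
              rw [h] at e1
              have e2 := Nat.div_add_mod n d
              have hxm : x % d ≤ n % d := by omega
              have : x % d / r ≤ n % d / r := Nat.div_le_div_right hxm
              omega
          · intro x hx y hy hxy
            simp only [Finset.mem_coe, hFA, Finset.mem_filter, Finset.mem_Icc] at hx hy
            obtain ⟨-, hxdvd⟩ := hx
            obtain ⟨-, hydvd⟩ := hy
            have h1 : x / d = y / d := (Prod.mk.injEq _ _ _ _ ▸ hxy).1
            have h2 : x % d / r = y % d / r := (Prod.mk.injEq _ _ _ _ ▸ hxy).2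
            have h3 : x % d = y % d := by
              rw [← Nat.div_mul_cancel hxdvd, ← Nat.div_mul_cancel hydvd, h2]
            have e1 := Nat.div_add_mod x d
            rw [h1] at e1
            have e2 := Nat.div_add_mod y d
            omega
        calc FA.card ≤ _ := hmain
          _ ≤ (Finset.range (n / d) ×ˢ Finset.range (d / r + 1)).card +
              ({n / d} ×ˢ Finset.range (n % d / r + 1)).card := Finset.card_union_le _ _
          _ = (n / d) * (d / r + 1) + (n % d / r + 1) := by
            simp [Finset.card_product]
      -- bound FB
      have hBcard : FB.card ≤ (n / d) * r + (if d ≤ n % d + r then r else 0) := by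
        have hmain : FB.card ≤ ((Finset.range (n / d) ×ˢ Finset.range r) ∪
            ({n / d} ×ˢ (if d ≤ n % d + r then Finset.range r else ∅))).card := by
          apply Finset.card_le_card_of_injOn (fun x => (x / d, x % d - (d - r)))
          · intro x hx
            simp only [Finset.mem_coe, hFB, Finset.mem_filter, Finset.mem_Icc] at hx
            obtain ⟨⟨hx1, hx2⟩, hxtop⟩ := hx
            have hxmd : x % d < d := Nat.mod_lt x hd
            simp only [Finset.mem_coe, Finset.mem_union, Finset.mem_product, Finset.mem_range,
              Finset.mem_singleton]
            have hxd : x / d ≤ n / d := Nat.div_le_div_right hx2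
            rcases lt_or_eq_of_le hxd with h | h
            · left; exact ⟨h, by omega⟩
            · right
              refine ⟨h, ?_⟩
              have e1 := Nat.div_add_mod x d
              rw [h] at e1
              have e2 := Nat.div_add_mod n d
              have hxm : x % d ≤ n % d := by omega
              have hcond : d ≤ n % d + r := by omega
              simp only [if_pos hcond, Finset.mem_range]
              omega
          · intro x hx y hy hxy
            simp only [Finset.mem_coe, hFB, Finset.mem_filter, Finset.mem_Icc] at hx hy
            obtain ⟨-, hxtop⟩ := hx
            obtain ⟨-, hytop⟩ := hy
            have hxmd : x % d < d := Nat.mod_lt x hd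
            have hymd : y % d < d := Nat.mod_lt y hd
            have h1 : x / d = y / d := (Prod.mk.injEq _ _ _ _ ▸ hxy).1
            have h2 : x % d - (d - r) = y % d - (d - r) := (Prod.mk.injEq _ _ _ _ ▸ hxy).2
            have h3 : x % d = y % d := by omega
            have e1 := Nat.div_add_mod x d
            rw [h1] at e1
            have e2 := Nat.div_add_mod y d
            omega
        calc FB.card ≤ _ := hmain
          _ ≤ (Finset.range (n / d) ×ˢ Finset.range r).card +
              ({n / d} ×ˢ (if d ≤ n % d + r then Finset.range r else ∅)).card :=
            Finset.card_union_le _ _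
          _ ≤ (n / d) * r + (if d ≤ n % d + r then r else 0) := by
            split_ifs with h <;> simp [Finset.card_product]
      -- now the real-number estimate
      set q := n / d with hqdef
      set m := n % d with hmdef
      set u := d / r with hudef
      set v := m / r with hvdef
      set w : ℕ := if d ≤ m + r then r else 0 with hwdef
      have htotal : ((Finset.Icc 1 n).filter (fun x => r ∣ x % d ∨ d ≤ x % d + r)).card ≤
          q * (u + 1) + (v + 1) + (q * r + w) := by omega
      -- real facts
      set σ := Real.sqrt d with hσdef
      have hss : σ * σ = d := Real.mul_self_sqrt (le_of_lt hd0)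
      have hNs : (Nat.sqrt d : ℝ) ≤ σ := by
        rw [hσdef, show ((Nat.sqrt d : ℝ)) = Real.sqrt ((Nat.sqrt d) * (Nat.sqrt d)) by
          rw [Real.sqrt_mul_self (by positivity)]]
        apply Real.sqrt_le_sqrt
        exact_mod_cast hsq1
      have hσ100 : (100:ℝ) ≤ σ := by
        have : (100 : ℝ) ≤ (Nat.sqrt d : ℝ) := by exact_mod_cast hsq100
        linarith
      have hrσ : σ ≤ (r:ℝ) := by
        rw [hσdef, show ((r:ℝ)) = Real.sqrt ((r:ℝ) * (r:ℝ)) by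
          rw [Real.sqrt_mul_self (by positivity)]]
        apply Real.sqrt_le_sqrt
        have : (d:ℝ) ≤ (r*r : ℕ) := by exact_mod_cast hsq2.le
        push_cast at this ⊢
        linarith
      have hrσ' : (r:ℝ) ≤ σ + 1 := by
        have : ((Nat.sqrt d : ℝ)) + 1 ≤ σ + 1 := by linarith
        rw [hrdef]; push_cast; linarith
      -- cast nat facts to ℝ
      have hq : (q:ℝ) * d ≤ n := by
        have := Nat.div_mul_le_self n d
        exact_mod_cast this
      have hu : (u:ℝ) * r ≤ d := by
        have := Nat.div_mul_le_self d r
        exact_mod_cast this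
      have hv : (v:ℝ) * r ≤ n := by
        have h1 : v * r ≤ m := Nat.div_mul_le_self m r
        have h2 : m ≤ n := Nat.mod_le n d
        have : v * r ≤ n := le_trans h1 h2
        exact_mod_cast this
      have hq0 : (0:ℝ) ≤ q := by positivity
      have hu0 : (0:ℝ) ≤ u := by positivity
      have hv0 : (0:ℝ) ≤ v := by positivity
      have hn0 : (0:ℝ) ≤ n := by positivity
      have hσσ : σ ≤ σ * σ := le_mul_of_one_le_left (le_of_lt hs0) (by linarith)
      -- piecewise bounds
      have A1 : (q:ℝ) * u * σ ≤ n := by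
        calc (q:ℝ) * u * σ ≤ q * u * r := mul_le_mul_of_nonneg_left hrσ (by positivity)
          _ = q * (u * r) := mul_assoc _ _ _
          _ ≤ q * d := mul_le_mul_of_nonneg_left hu hq0
          _ ≤ n := hq
      have A2 : (q:ℝ) * σ ≤ n := by
        calc (q:ℝ) * σ ≤ q * (σ * σ) := mul_le_mul_of_nonneg_left hσσ hq0
          _ = q * d := by rw [hss]
          _ ≤ n := hq
      have A3 : (v:ℝ) * σ ≤ n := by
        calc (v:ℝ) * σ ≤ v * r := mul_le_mul_of_nonneg_left hrσ hv0
          _ ≤ n := hv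
      have A4 : (q:ℝ) * r * σ ≤ 2 * n := by
        calc (q:ℝ) * r * σ ≤ q * (σ + 1) * σ :=
              mul_le_mul_of_nonneg_right (mul_le_mul_of_nonneg_left hrσ' hq0) (le_of_lt hs0)
          _ = q * (σ * σ) + q * σ := by ring
          _ = q * d + q * σ := by rw [hss]
          _ ≤ n + n := add_le_add hq A2
          _ = 2 * n := by ring
      have A5 : (w:ℝ) * σ ≤ 4 * n := by
        rw [hwdef]
        split_ifs with h
        · -- then n ≥ d - r, so d ≤ 2n
          have hdn : (d:ℝ) ≤ 2 * n := by
            have h1 : m ≤ n := Nat.mod_le n d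
            have : d ≤ 2 * n := by omega
            exact_mod_cast this
          calc ((r:ℕ):ℝ) * σ ≤ (σ + 1) * σ := mul_le_mul_of_nonneg_right hrσ' (le_of_lt hs0)
            _ = σ * σ + σ := by ring
            _ ≤ (d:ℝ) + d := by rw [hss]; linarith
            _ ≤ 2 * n + 2 * n := by linarith
            _ = 4 * n := by ring
        · rw [Nat.cast_zero, zero_mul]
          positivity
      have hkey : (((Finset.Icc 1 n).filter
          (fun x => r ∣ x % d ∨ d ≤ x % d + r)).card : ℝ) * σ ≤ 9 * n + σ := by
        have hcast : (((Finset.Icc 1 n).filter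
            (fun x => r ∣ x % d ∨ d ≤ x % d + r)).card : ℝ) ≤
            q * (u + 1) + (v + 1) + (q * r + w) := by exact_mod_cast htotal
        have hmul := mul_le_mul_of_nonneg_right hcast (le_of_lt hs0)
        have hexp : ((q:ℝ) * (u + 1) + (v + 1) + (q * r + w)) * σ =
            q * u * σ + q * σ + v * σ + σ + q * r * σ + w * σ := by ring
        rw [hexp] at hmul
        linarith
      have hfinal : (((Finset.Icc 1 n).filter
          (fun x => r ∣ x % d ∨ d ≤ x % d + r)).card : ℝ) ≤ 9 * n / σ + 1 := by
        rw [show (9:ℝ) * n / σ + 1 = (9 * n + σ) / σ by field_simp]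
        rw [le_div_iff₀ hs0]
        exact hkey
      have hpos : (0:ℝ) ≤ (n:ℝ) / σ := by positivity
      have : (9:ℝ) * n / σ + 1 ≤ 100 * n / σ + 100 := by
        have h9 : (9:ℝ) * n / σ = 9 * (n / σ) := by ring
        have h100 : (100:ℝ) * n / σ = 100 * (n / σ) := by ring
        rw [h9, h100]; linarith
      push_cast
      linarith
end

section
/- Lower bound direction of the difference-cover reduction: if LCF_k(X,Y) ≥ ℓ, then there exist (U₁,U₂) ∈ Pairs_ℓ(X), (V₁,V₂) ∈ Pairs_ℓ(Y), and nonnegative integers p, q with p + q = k such that LCP_p(U₁,V₁) + LCP_q(U₂,V₂) ≥ LCF_k(X,Y). -/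
/-! A maximal `k`-mismatch common factor starts at some positions `i` of `X` and `j` of `Y`.
Since `LCF_k(X,Y) ≥ ℓ`, the cover property gives a shift `h < ℓ` that stays inside the factor
and puts both `i + h` and `j + h` into the cover. Cutting the factor there, its left part read
backwards is a common prefix of the reversed prefixes, its right part a common prefix of the
suffixes, and the `k` mismatches split as `p + q` between the two parts. -/

/-- Hamming distance between the aligned parts of two lists. -/
def hdistL {α : Type*} [DecidableEq α] (A B : List α) : ℕ :=
  (A.zip B).countP (fun pr => decide (pr.1 ≠ pr.2))

/-- Longest common prefix with at most `d` mismatches. -/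
def LCPd {α : Type*} [DecidableEq α] (d : ℕ) (U V : List α) : ℕ :=
  Nat.findGreatest (fun p => hdistL (U.take p) (V.take p) ≤ d) (min U.length V.length)

/-- `m` is the length of a common factor of `X` and `Y` with at most `k` mismatches. -/
def IsCF {α : Type*} [DecidableEq α] (k : ℕ) (X Y : List α) (m : ℕ) : Prop :=
  ∃ i j : ℕ, i + m ≤ X.length ∧ j + m ≤ Y.length ∧
    hdistL ((X.drop i).take m) ((Y.drop j).take m) ≤ k

/-- `LCF k X Y`: the maximal length of a pair of factors of `X` and `Y` (one of each)
with Hamming distance at most `k`. -/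
noncomputable def LCF {α : Type*} [DecidableEq α] (k : ℕ) (X Y : List α) : ℕ :=
  sSup {m | IsCF k X Y m}

/-- `Pairs_ℓ(S)` built from the (1-indexed) positions of a cover `Cov`:
pairs `((S[1..i−1])^R, S[i..])` for `i ∈ Cov ∩ [1..|S|]`. -/
def PairsOf {α : Type*} (Cov : Set ℕ) (S : List α) : Set (List α × List α) :=
  {pr | ∃ i ∈ Cov, 1 ≤ i ∧ i ≤ S.length ∧ pr = ((S.take (i - 1)).reverse, S.drop (i - 1))}

lemma take_reverse_take_add {α : Type*} {S : List α} {i h : ℕ} (hS : i + h ≤ S.length) :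
    (S.take (i + h)).reverse.take h = ((S.drop i).take h).reverse := by
  rw [List.take_add, List.reverse_append, List.take_left' (by simp; omega)]

section Hamming

variable {α : Type*} [DecidableEq α]

lemma hdistL_append {A B C D : List α} (h : A.length = C.length) :
    hdistL (A ++ B) (C ++ D) = hdistL A C + hdistL B D := by
  rw [hdistL, List.zip_append h, List.countP_append, ← hdistL, ← hdistL]

lemma hdistL_reverse {A B : List α} (h : A.length = B.length) :
    hdistL A.reverse B.reverse = hdistL A B := by
  rw [hdistL, List.zip_eq_zipWith, ← List.reverse_zipWith h, List.countP_reverse,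
    ← List.zip_eq_zipWith, ← hdistL]

lemma hdistL_take_eq_add {A B : List α} {h m : ℕ} (hm : h ≤ m) (hA : h ≤ A.length)
    (hB : h ≤ B.length) :
    hdistL (A.take m) (B.take m) =
      hdistL (A.take h) (B.take h) + hdistL ((A.drop h).take (m - h)) ((B.drop h).take (m - h)) := by
  rw [← Nat.add_sub_cancel' hm, List.take_add, List.take_add, Nat.add_sub_cancel_left,
    hdistL_append (by simp [hA, hB])]

lemma le_LCPd {d n : ℕ} {U V : List α} (hU : n ≤ U.length) (hV : n ≤ V.length)
    (h : hdistL (U.take n) (V.take n) ≤ d) : n ≤ LCPd d U V :=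
  Nat.le_findGreatest (le_min hU hV) h

lemma le_LCPd_reverse_take {S T : List α} {i j h : ℕ} (hS : i + h ≤ S.length)
    (hT : j + h ≤ T.length) :
    h ≤ LCPd (hdistL ((S.drop i).take h) ((T.drop j).take h))
      (S.take (i + h)).reverse (T.take (j + h)).reverse := by
  refine le_LCPd (by simp; omega) (by simp; omega) ?_
  rw [take_reverse_take_add hS, take_reverse_take_add hT, hdistL_reverse (by simp; omega)]

lemma exists_le_LCPd_add_LCPd {S T : List α} {i j h m k : ℕ} (hS : i + m ≤ S.length)
    (hT : j + m ≤ T.length) (hd : hdistL ((S.drop i).take m) ((T.drop j).take m) ≤ k)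
    (hm : h ≤ m) :
    ∃ p q, p + q = k ∧ m ≤ LCPd p (S.take (i + h)).reverse (T.take (j + h)).reverse +
      LCPd q (S.drop (i + h)) (T.drop (j + h)) := by
  rw [hdistL_take_eq_add hm (by simp; omega) (by simp; omega), List.drop_drop,
    List.drop_drop] at hd
  set p := hdistL ((S.drop i).take h) ((T.drop j).take h)
  have hright : m - h ≤ LCPd (k - p) (S.drop (i + h)) (T.drop (j + h)) :=
    le_LCPd (by simp; omega) (by simp; omega) (by omega)
  have hleft : h ≤ LCPd p (S.take (i + h)).reverse (T.take (j + h)).reverse :=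
    le_LCPd_reverse_take (by omega) (by omega)
  exact ⟨p, k - p, by omega, by omega⟩

lemma isCF_LCF (k : ℕ) (X Y : List α) : IsCF k X Y (LCF k X Y) :=
  Nat.sSup_mem (s := {m | IsCF k X Y m}) ⟨0, 0, 0, by simp, by simp, by simp [hdistL]⟩
    ⟨X.length, fun m ⟨i, _, hi, _, _⟩ => by omega⟩

end Hamming

lemma mem_PairsOf {α : Type*} {Cov : Set ℕ} {S : List α} {i : ℕ} (hi : i + 1 ∈ Cov)
    (hS : i < S.length) : ((S.take i).reverse, S.drop i) ∈ PairsOf Cov S :=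
  ⟨i + 1, hi, by omega, hS, by simp⟩

/-- lower bound direction of the reduction: if `Cov` is an `ℓ`-cover and
`LCF_k(X,Y) ≥ ℓ`, then there are `(U₁,U₂) ∈ Pairs_ℓ(X)`, `(V₁,V₂) ∈ Pairs_ℓ(Y)` and
`p + q = k` with `LCP_p(U₁,V₁) + LCP_q(U₂,V₂) ≥ LCF_k(X,Y)`. -/
theorem lcf_le_some_pair_lcp {α : Type*} [DecidableEq α]
    (Cov : Set ℕ) (ℓ : ℕ) (X Y : List α) (k : ℕ)
    (hCov : ∀ i j : ℕ, 0 < i → 0 < j → ∃ h : ℕ, h < ℓ ∧ i + h ∈ Cov ∧ j + h ∈ Cov)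
    (hLCF : ℓ ≤ LCF k X Y) :
    ∃ (U₁ U₂ V₁ V₂ : List α) (p q : ℕ),
      (U₁, U₂) ∈ PairsOf Cov X ∧ (V₁, V₂) ∈ PairsOf Cov Y ∧ p + q = k ∧
      LCF k X Y ≤ LCPd p U₁ V₁ + LCPd q U₂ V₂ := by
  obtain ⟨i, j, hiX, hjY, hd⟩ := isCF_LCF k X Y
  obtain ⟨h, hhℓ, hiCov, hjCov⟩ := hCov (i + 1) (j + 1) i.succ_pos j.succ_pos
  have hh : h < LCF k X Y := hhℓ.trans_le hLCF
  obtain ⟨p, q, hpq, hle⟩ := exists_le_LCPd_add_LCPd hiX hjY hd hh.le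
  exact ⟨_, _, _, _, p, q, mem_PairsOf (by rwa [add_right_comm]) (by omega),
    mem_PairsOf (by rwa [add_right_comm]) (by omega), hpq, hle⟩
end

section
/- If (U',V') is a (U,V)_d-pair, then d_H(U,U') + d_H(V,V') − #_$(P) = d_H(U[1..|P|], V[1..|P|]) ≤ d, where P is the longest common prefix of U' and V' and #_$(P) counts wildcard symbols in P. -/
/-- Number of wildcard symbols `$` (encoded as `none`) in a string over `Σ ∪ {$}`. -/
def countDollar {α : Type*} (P : List (Option α)) : ℕ :=
  P.countP (fun x => x.isNone)

/-- `(U,V)_d`-pair: strings `U', V'` over `Σ ∪ {$}` (letter `a` is `some a`, `$` is `none`)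
such that `|U'| = |U|`, `|V'| = |V|`; at every position `i` beyond `LCP_d(U,V)` or where
`U[i] = V[i]` we have `U'[i] = U[i]` and `V'[i] = V[i]`; and at the remaining positions
(`i < LCP_d(U,V)` with `U[i] ≠ V[i]`) we have `U'[i] = V'[i] ∈ {U[i], V[i], $}`.
(Positions are 0-indexed, so `i ≥ LCP_d(U,V)` corresponds to 1-indexed `i > LCP_d(U,V)`.) -/
def IsPairD {α : Type*} [DecidableEq α] (d : ℕ) (U V : List α)
    (U' V' : List (Option α)) : Prop :=
  U'.length = U.length ∧ V'.length = V.length ∧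
  (∀ i : ℕ, (LCPd d U V ≤ i ∨ U[i]? = V[i]?) →
      U'[i]? = (U[i]?).map some ∧ V'[i]? = (V[i]?).map some) ∧
  (∀ i : ℕ, i < LCPd d U V → U[i]? ≠ V[i]? →
      U'[i]? = V'[i]? ∧
      (U'[i]? = (U[i]?).map some ∨ U'[i]? = (V[i]?).map some ∨ U'[i]? = some none))

lemma hdistL_eq_sum {α : Type*} [DecidableEq α] (A B : List α) :
    hdistL A B = ∑ i ∈ Finset.range (min A.length B.length),
      (if A[i]? = B[i]? then 0 else 1) := by
  induction A generalizing B with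
  | nil => simp [hdistL]
  | cons a A ih =>
    cases B with
    | nil => simp [hdistL]
    | cons b B =>
      have hmin : min (a::A).length (b::B).length = min A.length B.length + 1 := by
        simp [Nat.succ_min_succ]
      rw [hmin, Finset.sum_range_succ']
      have h1 : hdistL (a::A) (b::B) = hdistL A B + (if a = b then 0 else 1) := by
        simp only [hdistL, List.zip_cons_cons, List.countP_cons]
        split_ifs with h h2 <;> simp_all
      rw [h1, ih]
      simp

lemma countDollar_eq_sum {α : Type*} [DecidableEq α] (A : List (Option α)) :
    countDollar A = ∑ i ∈ Finset.range A.length,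
      (if A[i]? = some none then 1 else 0) := by
  induction A with
  | nil => simp [countDollar]
  | cons a A ih =>
    rw [List.length_cons, Finset.sum_range_succ']
    have h1 : countDollar (a::A) = countDollar A + (if a = none then 1 else 0) := by
      simp only [countDollar, List.countP_cons, Option.isNone_iff_eq_none]
    rw [h1, ih]
    simp

/-- if `(U',V')` is a `(U,V)_d`-pair and `P` is the longest common prefix
of `U'` and `V'` (of length `p = LCP(U',V')`), then
`d_H(U,U') + d_H(V,V') − #_$(P) = d_H(U[1..p], V[1..p]) ≤ d`
(stated additively to avoid truncated subtraction). -/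
theorem pairD_distance_identity {α : Type*} [DecidableEq α] {d : ℕ} {U V : List α}
    {U' V' : List (Option α)} (h : IsPairD d U V U' V') :
    hdistL (U.map some) U' + hdistL (V.map some) V' =
      hdistL (U.take (LCPd 0 U' V')) (V.take (LCPd 0 U' V')) +
        countDollar (U'.take (LCPd 0 U' V')) ∧
    hdistL (U.take (LCPd 0 U' V')) (V.take (LCPd 0 U' V')) ≤ d := by
  obtain ⟨hU, hV, h3, h4⟩ := h
  set L := LCPd d U V with hL
  set p := LCPd 0 U' V' with hp
  have hLmin : L ≤ min U.length V.length := Nat.findGreatest_le _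
  have hpmin : p ≤ min U.length V.length := by
    have h1 : p ≤ min U'.length V'.length := Nat.findGreatest_le _
    rw [hU, hV] at h1; exact h1
  -- F2 : within L, U' and V' agree
  have hF2 : ∀ i < L, U'[i]? = V'[i]? := by
    intro i hi
    by_cases he : U[i]? = V[i]?
    · obtain ⟨e1, e2⟩ := h3 i (Or.inr he); rw [e1, e2, he]
    · exact (h4 i hi he).1
  -- L ≤ p
  have hdzero : ∀ q, q ≤ min U.length V.length → (∀ i < q, U'[i]? = V'[i]?) →
      hdistL (U'.take q) (V'.take q) = 0 := by
    intro q hq hagree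
    rw [hdistL_eq_sum]
    apply Finset.sum_eq_zero
    intro i hi
    rw [Finset.mem_range, List.length_take, List.length_take, hU, hV] at hi
    have hiq : i < q := lt_of_lt_of_le hi (by omega)
    rw [List.getElem?_take, List.getElem?_take, if_pos hiq, if_pos hiq, hagree i hiq]
    simp
  have hLp : L ≤ p := by
    apply Nat.le_findGreatest (by rw [hU, hV]; exact hLmin)
    exact le_of_eq (hdzero L hLmin hF2)
  -- F4 : within p, U' and V' agree
  have hF4 : ∀ i < p, U'[i]? = V'[i]? := by
    have hspec : hdistL (U'.take p) (V'.take p) ≤ 0 :=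
      Nat.findGreatest_spec (P := fun q => hdistL (U'.take q) (V'.take q) ≤ 0)
        (Nat.zero_le _) (by simp [hdistL])
    rw [hdistL_eq_sum] at hspec
    intro i hi
    have hmem : i ∈ Finset.range (min (U'.take p).length (V'.take p).length) := by
      rw [Finset.mem_range, List.length_take, List.length_take, hU, hV]; omega
    have := (Finset.sum_eq_zero_iff.mp (Nat.le_zero.mp hspec)) i hmem
    rw [List.getElem?_take, List.getElem?_take, if_pos hi, if_pos hi] at this
    by_contra hne
    rw [if_neg hne] at this
    exact one_ne_zero this
  -- F5 : for L ≤ i < p, U and V agree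
  have hF5 : ∀ i, L ≤ i → i < p → U[i]? = V[i]? := by
    intro i h1 h2
    obtain ⟨e1, e2⟩ := h3 i (Or.inl h1)
    have he := hF4 i h2
    rw [e1, e2] at he
    exact Option.map_injective (Option.some_injective α) he
  -- abbreviations for the indicator functions
  set a : ℕ → ℕ := fun i => if (U[i]?).map some = U'[i]? then 0 else 1 with ha
  set b : ℕ → ℕ := fun i => if (V[i]?).map some = V'[i]? then 0 else 1 with hb
  set c : ℕ → ℕ := fun i => if U[i]? = V[i]? then 0 else 1 with hc
  set e : ℕ → ℕ := fun i => if U'[i]? = some none then 1 else 0 with he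
  -- rewrite the four quantities as sums
  have hA : hdistL (U.map some) U' = ∑ i ∈ Finset.range U.length, a i := by
    rw [hdistL_eq_sum]
    have : min (U.map some).length U'.length = U.length := by simp [hU]
    rw [this]
    exact Finset.sum_congr rfl (fun i _ => by rw [List.getElem?_map])
  have hB : hdistL (V.map some) V' = ∑ i ∈ Finset.range V.length, b i := by
    rw [hdistL_eq_sum]
    have : min (V.map some).length V'.length = V.length := by simp [hV]
    rw [this]
    exact Finset.sum_congr rfl (fun i _ => by rw [List.getElem?_map])
  have hC : hdistL (U.take p) (V.take p) = ∑ i ∈ Finset.range p, c i := by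
    rw [hdistL_eq_sum]
    have : min (U.take p).length (V.take p).length = p := by
      rw [List.length_take, List.length_take]; omega
    rw [this]
    refine Finset.sum_congr rfl (fun i hi => ?_)
    rw [Finset.mem_range] at hi
    rw [List.getElem?_take, List.getElem?_take, if_pos hi, if_pos hi]
  have hE : countDollar (U'.take p) = ∑ i ∈ Finset.range p, e i := by
    rw [countDollar_eq_sum]
    have : (U'.take p).length = p := by rw [List.length_take, hU]; omega
    rw [this]
    refine Finset.sum_congr rfl (fun i hi => ?_)
    rw [Finset.mem_range] at hi
    rw [List.getElem?_take, if_pos hi]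
  -- values at positions i ≥ L (or where U,V agree): a,b vanish
  have haz : ∀ i, L ≤ i ∨ U[i]? = V[i]? → a i = 0 := by
    intro i hi
    obtain ⟨e1, _⟩ := h3 i hi
    simp [ha, e1]
  have hbz : ∀ i, L ≤ i ∨ U[i]? = V[i]? → b i = 0 := by
    intro i hi
    obtain ⟨_, e2⟩ := h3 i hi
    simp [hb, e2]
  -- c, e vanish on [L, p)
  have hcz : ∀ i, L ≤ i → i < p → c i = 0 := fun i h1 h2 => by
    simp [hc, hF5 i h1 h2]
  have hez : ∀ i, L ≤ i → i < p → e i = 0 := by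
    intro i h1 h2
    obtain ⟨e1, _⟩ := h3 i (Or.inl h1)
    have hiU : i < U.length := by omega
    simp [he, e1, List.getElem?_eq_getElem hiU]
  -- truncate all four sums to range L
  have hsA : ∑ i ∈ Finset.range U.length, a i = ∑ i ∈ Finset.range L, a i := by
    refine (Finset.sum_subset (Finset.range_subset_range.mpr (by omega)) ?_).symm
    intro i _ hi
    exact haz i (Or.inl (by rw [Finset.mem_range] at hi; omega))
  have hsB : ∑ i ∈ Finset.range V.length, b i = ∑ i ∈ Finset.range L, b i := by
    refine (Finset.sum_subset (Finset.range_subset_range.mpr (by omega)) ?_).symm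
    intro i _ hi
    exact hbz i (Or.inl (by rw [Finset.mem_range] at hi; omega))
  have hsC : ∑ i ∈ Finset.range p, c i = ∑ i ∈ Finset.range L, c i := by
    refine (Finset.sum_subset (Finset.range_subset_range.mpr hLp) ?_).symm
    intro i hi' hi
    rw [Finset.mem_range] at hi' hi
    exact hcz i (by omega) hi'
  have hsE : ∑ i ∈ Finset.range p, e i = ∑ i ∈ Finset.range L, e i := by
    refine (Finset.sum_subset (Finset.range_subset_range.mpr hLp) ?_).symm
    intro i hi' hi
    rw [Finset.mem_range] at hi' hi
    exact hez i (by omega) hi'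
  -- pointwise identity on range L
  have hpt : ∀ i < L, a i + b i = c i + e i := by
    intro i hi
    have hiU : i < U.length := by omega
    have hiV : i < V.length := by omega
    by_cases heq : U[i]? = V[i]?
    · obtain ⟨e1, _⟩ := h3 i (Or.inr heq)
      have hcU : U[i]? = some U[i] := List.getElem?_eq_getElem hiU
      have ha0 : a i = 0 := haz i (Or.inr heq)
      have hb0 : b i = 0 := hbz i (Or.inr heq)
      have hc0 : c i = 0 := by simp [hc, heq]
      have he0 : e i = 0 := by simp [he, e1, hcU]
      omega
    · obtain ⟨heUV, hcases⟩ := h4 i hi heq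
      have hcU : U[i]? = some U[i] := List.getElem?_eq_getElem hiU
      have hcV : V[i]? = some V[i] := List.getElem?_eq_getElem hiV
      have hc1 : c i = 1 := by simp [hc, heq]
      rcases hcases with h1 | h1 | h1
      · have ha0 : a i = 0 := by simp [ha, h1]
        have hne : Option.map some V[i]? ≠ V'[i]? := by
          intro hcon
          exact heq (Option.map_injective (Option.some_injective α)
            ((h1.symm.trans heUV).trans hcon.symm))
        have hb1 : b i = 1 := by simp [hb, hne]
        have he0 : e i = 0 := by simp [he, h1, hcU]
        omega
      · have hb0 : b i = 0 := by simp [hb, ← heUV, h1]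
        have hne : Option.map some U[i]? ≠ U'[i]? := by
          intro hcon
          exact heq (Option.map_injective (Option.some_injective α)
            (hcon.trans h1))
        have ha1 : a i = 1 := by simp [ha, hne]
        have he0 : e i = 0 := by simp [he, h1, hcV]
        omega
      · have ha1 : a i = 1 := by simp [ha, h1, hcU]
        have hb1 : b i = 1 := by simp [hb, ← heUV, h1, hcV]
        have he1 : e i = 1 := by simp [he, h1]
        omega
  have hsum : ∑ i ∈ Finset.range L, (a i + b i) = ∑ i ∈ Finset.range L, (c i + e i) :=
    Finset.sum_congr rfl (fun i hi => hpt i (Finset.mem_range.mp hi))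
  rw [Finset.sum_add_distrib, Finset.sum_add_distrib] at hsum
  -- the ≤ d part
  have hDL : hdistL (U.take L) (V.take L) ≤ d :=
    Nat.findGreatest_spec (P := fun q => hdistL (U.take q) (V.take q) ≤ d)
      (Nat.zero_le _) (by simp [hdistL])
  have hCL : hdistL (U.take L) (V.take L) = ∑ i ∈ Finset.range L, c i := by
    rw [hdistL_eq_sum]
    have : min (U.take L).length (V.take L).length = L := by
      rw [List.length_take, List.length_take]; omega
    rw [this]
    refine Finset.sum_congr rfl (fun i hi => ?_)
    rw [Finset.mem_range] at hi
    rw [List.getElem?_take, List.getElem?_take, if_pos hi, if_pos hi]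
  constructor
  · rw [hA, hB, hC, hE, hsA, hsB, hsC, hsE]; exact hsum
  · rw [hC, hsC, ← hCL]; exact hDL
end

section
/- Size bound for the recursively constructed neighbor sets: the function T(m,b) defined by T(m,0) = 1, T(1,b) = 1, and T(m,b) ≤ T(⌊m/2⌋,b) + 2·T(m,b−1) satisfies T(2^L, b) ≤ 2^b · C(L+b, b), where C denotes the binomial coefficient. -/
/-- size bound for the recursive neighbor-set construction: if
`T(m,0) = 1`, `T(1,b) = 1` and `T(m,b) ≤ T(⌊m/2⌋,b) + 2·T(m,b−1)` for `b ≥ 1`,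
then `T(2^L, b) ≤ 2^b · C(L+b, b)`. -/
theorem neighbor_size_bound (T : ℕ → ℕ → ℕ)
    (h0 : ∀ m, T m 0 = 1) (h1 : ∀ b, T 1 b = 1)
    (hrec : ∀ m b, 1 ≤ b → T m b ≤ T (m / 2) b + 2 * T m (b - 1)) :
    ∀ L b : ℕ, T (2 ^ L) b ≤ 2 ^ b * Nat.choose (L + b) b := by
  suffices H : ∀ n L b, L + b = n → T (2 ^ L) b ≤ 2 ^ b * Nat.choose (L + b) b from
    fun L b => H (L + b) L b rfl
  intro n
  induction n using Nat.strong_induction_on with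
  | _ n ih =>
    intro L b hn
    subst hn
    match L, b with
    | L, 0 => simp [h0]
    | 0, b + 1 => simp [h1, Nat.one_le_two_pow]
    | L + 1, b + 1 =>
      have hrec' := hrec (2 ^ (L + 1)) (b + 1) (Nat.le_add_left 1 b)
      have hdiv : 2 ^ (L + 1) / 2 = 2 ^ L := by
        rw [pow_succ, Nat.mul_div_cancel] ; norm_num
      rw [hdiv, Nat.add_sub_cancel] at hrec'
      have h1' := ih (L + (b + 1)) (by omega) L (b + 1) rfl
      have h2' := ih (L + 1 + b) (by omega) (L + 1) b rfl
      calc T (2 ^ (L + 1)) (b + 1) ≤ T (2 ^ L) (b + 1) + 2 * T (2 ^ (L + 1)) b := hrec'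
        _ ≤ 2 ^ (b + 1) * Nat.choose (L + (b + 1)) (b + 1)
            + 2 * (2 ^ b * Nat.choose (L + 1 + b) b) := by
            exact Nat.add_le_add h1' (Nat.mul_le_mul_left 2 h2')
        _ = 2 ^ (b + 1) * (Nat.choose (L + b + 1) b + Nat.choose (L + b + 1) (b + 1)) := by
            rw [show L + (b + 1) = L + b + 1 by ring, show L + 1 + b = L + b + 1 by ring,
              Nat.mul_add, pow_succ]
            ring
        _ = 2 ^ (b + 1) * Nat.choose (L + 1 + (b + 1)) (b + 1) := by
            conv_rhs => rw [show L + 1 + (b + 1) = (L + b + 1) + 1 by ring,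
              Nat.choose_succ_succ']
end

section
/- Token inequality in the amortized analysis: for all integers b ≥ 1 and set sizes m ≥ m_c, m ≥ m_h, m ≥ m_$ with m_c ≤ m/2, if Tokens(m,b) = (2^{b+1}−1)·C(⌈log₂ m⌉+b+1, b+1), then Tokens(m,b) − Tokens(m_c,b) − Tokens(m_h,b−1) − Tokens(m_$,b−1) ≥ C(⌈log₂ m⌉+b, b). -/
/-- `Tokens(m,b) = (2^{b+1} − 1) · C(⌈log₂ m⌉ + b + 1, b + 1)`. -/
def Tokens (m b : ℕ) : ℕ :=
  (2 ^ (b + 1) - 1) * Nat.choose (Nat.clog 2 m + b + 1) (b + 1)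

/-- token inequality of the amortized analysis: for `b ≥ 1` and set sizes
`m_c, m_h, m_$ ≤ m` with `m_c ≤ m/2` (so that `⌈log₂ m_c⌉ ≤ ⌈log₂ m⌉ − 1`),
`Tokens(m,b) − Tokens(m_c,b) − Tokens(m_h,b−1) − Tokens(m_$,b−1) ≥ C(⌈log₂ m⌉+b, b)`
(stated additively to avoid truncated subtraction). -/
theorem token_inequality (m mc mh ms b : ℕ) (hb : 1 ≤ b)
    (hcm : mc ≤ m) (hhm : mh ≤ m) (hsm : ms ≤ m)
    (hc : mc ≤ m / 2) (hc' : Nat.clog 2 mc + 1 ≤ Nat.clog 2 m) :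
    Tokens mc b + Tokens mh (b - 1) + Tokens ms (b - 1) +
        Nat.choose (Nat.clog 2 m + b) b ≤ Tokens m b := by
  obtain ⟨b, rfl⟩ := Nat.exists_eq_add_of_le hb
  set L := Nat.clog 2 m with hL
  have hmh : Nat.clog 2 mh ≤ L := Nat.clog_mono_right 2 hhm
  have hms : Nat.clog 2 ms ≤ L := Nat.clog_mono_right 2 hsm
  simp only [show 1 + b - 1 = b from by omega]
  have h1 : (2 ^ (1 + b + 1) - 1) * Nat.choose (Nat.clog 2 mc + (1 + b) + 1) (1 + b + 1)
      ≤ (2 ^ (1 + b + 1) - 1) * Nat.choose (L + (1 + b)) (1 + b + 1) := by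
    apply Nat.mul_le_mul_left
    apply Nat.choose_le_choose
    omega
  have h2 : (2 ^ (b + 1) - 1) * Nat.choose (Nat.clog 2 mh + b + 1) (b + 1)
      ≤ (2 ^ (b + 1) - 1) * Nat.choose (L + (1 + b)) (b + 1) := by
    apply Nat.mul_le_mul_left
    apply Nat.choose_le_choose
    omega
  have h3 : (2 ^ (b + 1) - 1) * Nat.choose (Nat.clog 2 ms + b + 1) (b + 1)
      ≤ (2 ^ (b + 1) - 1) * Nat.choose (L + (1 + b)) (b + 1) := by
    apply Nat.mul_le_mul_left
    apply Nat.choose_le_choose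
    omega
  have hch : Nat.choose (L + (1 + b)) (1 + b) = Nat.choose (L + (1 + b)) (b + 1) := by
    rw [Nat.add_comm 1 b]
  have hpascal : Nat.choose (L + (1 + b) + 1) (1 + b + 1)
      = Nat.choose (L + (1 + b)) (1 + b) + Nat.choose (L + (1 + b)) (1 + b + 1) := by
    rw [Nat.choose_succ_succ]
  have hpow : 2 ^ (1 + b + 1) = 2 * 2 ^ (b + 1) := by ring
  have hp1 : 1 ≤ 2 ^ (b + 1) := Nat.one_le_two_pow
  calc Tokens mc (1 + b) + Tokens mh b + Tokens ms b + Nat.choose (L + (1 + b)) (1 + b)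
      ≤ (2 ^ (1 + b + 1) - 1) * Nat.choose (L + (1 + b)) (1 + b + 1)
        + (2 ^ (b + 1) - 1) * Nat.choose (L + (1 + b)) (b + 1)
        + (2 ^ (b + 1) - 1) * Nat.choose (L + (1 + b)) (b + 1)
        + Nat.choose (L + (1 + b)) (1 + b) := by
        simp only [Tokens]
        omega
    _ = (2 ^ (1 + b + 1) - 1) * Nat.choose (L + (1 + b) + 1) (1 + b + 1) := by
        rw [hpascal, hch]
        have h2b : 2 ^ (1 + b + 1) - 1 = (2 ^ (b + 1) - 1) + (2 ^ (b + 1) - 1) + 1 := by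
          omega
        rw [h2b]
        ring
    _ = Tokens m (1 + b) := rfl
end
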